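/- arXiv:2111.07425 — 8 statements merged into one kernel-verified Lean document; each statement's English description precedes it below -/
import Mathlib

section
/- If G is a connected bipartite graph and S is a general position set of G with |S| ≥ 3, then S is an independent set. -/
open SimpleGraph

/-- The interval `I_G[u,v]`: vertices lying on some shortest `u,v`-path. -/
def gpInterval {V : Type*} (G : SimpleGraph V) (u v : V) : Set V :=
  {x | ∃ p : G.Walk u v, p.length = G.dist u v ∧ x ∈ p.support}

/-- A general position set: no three (distinct) vertices of `S` lie on a common
shortest path. -/
def IsGPSet {V : Type*} (G : SimpleGraph V) (S : Set V) : Prop :=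
  ∀ u ∈ S, ∀ v ∈ S, ∀ w ∈ S, u ≠ v → v ≠ w → u ≠ w → v ∉ gpInterval G u w

/-- A maximal general position set. -/
def IsMaximalGPSet {V : Type*} (G : SimpleGraph V) (S : Set V) : Prop :=
  IsGPSet G S ∧ ∀ T : Set V, IsGPSet G T → S ⊆ T → T = S

/-- The general position number of a graph. -/
noncomputable def gpNumber {V : Type*} (G : SimpleGraph V) : ℕ :=
  sSup {n : ℕ | ∃ S : Finset V, IsGPSet G ↑S ∧ S.card = n}

/-- The lexicographic product of two simple graphs. -/
def lexProd {α β : Type*} (G : SimpleGraph α) (H : SimpleGraph β) :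
    SimpleGraph (α × β) where
  Adj x y := G.Adj x.1 y.1 ∨ (x.1 = y.1 ∧ H.Adj x.2 y.2)
  symm := by
    constructor
    intro x y h
    rcases h with h | ⟨h1, h2⟩
    · exact Or.inl h.symm
    · exact Or.inr ⟨h1.symm, h2.symm⟩
  loopless := by
    constructor
    intro x h
    rcases h with h | ⟨_, h2⟩
    · exact G.irrefl h
    · exact H.irrefl h2

/-!
In a bipartite graph the distances from the two ends of an edge `uv` to any vertex `w` have
different parities, so they differ by exactly one. If, say, `d(u,w) = d(v,w) + 1`, then the edge
`uv` followed by a shortest `v,w`-path is a shortest `u,w`-path through `v`. Hence no general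
position set can contain an edge together with a third vertex.
-/

lemma Set.exists_mem_ne_ne_of_two_lt_ncard {α : Type*} {s : Set α} (hs : 2 < s.ncard) (a b : α) :
    ∃ c ∈ s, c ≠ a ∧ c ≠ b := by
  have hpair : ({a, b} : Set α).ncard < s.ncard :=
    (Set.ncard_insert_le a {b}).trans_lt (by simpa using hs)
  obtain ⟨c, hcs, hc⟩ := Set.exists_mem_notMem_of_ncard_lt_ncard hpair
  exact ⟨c, hcs, by simp_all⟩

namespace SimpleGraph

variable {V : Type*} {G : SimpleGraph V} {u v w : V}

lemma Adj.dist_ne_dist_of_coloring (c : G.Coloring Bool) (hadj : G.Adj u v)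
    (hw : G.Reachable u w) : G.dist u w ≠ G.dist v w := by
  obtain ⟨p, hp⟩ := hw.exists_walk_length_eq_dist
  obtain ⟨q, hq⟩ := (hadj.symm.reachable.trans hw).exists_walk_length_eq_dist
  intro h
  have hcolor : (c u ↔ c w) ↔ (c v ↔ c w) := by
    rw [← c.even_length_iff_congr p, ← c.even_length_iff_congr q, hp, hq, h]
  exact c.valid hadj (Bool.eq_iff_iff.mpr (by tauto))

lemma Adj.mem_gpInterval_of_dist_eq_succ (hadj : G.Adj u v) (hw : G.Reachable v w)
    (h : G.dist u w = G.dist v w + 1) : v ∈ gpInterval G u w := by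
  obtain ⟨q, hq⟩ := hw.exists_walk_length_eq_dist
  exact ⟨Walk.cons hadj q, by simp [hq, h], by simp⟩

lemma Adj.mem_gpInterval_or_mem_gpInterval (hbip : G.Colorable 2) (hadj : G.Adj u v)
    (hw : G.Reachable u w) : v ∈ gpInterval G u w ∨ u ∈ gpInterval G v w := by
  have c : G.Coloring Bool := G.recolorOfEquiv finTwoEquiv hbip.some
  have hvw : G.Reachable v w := hadj.symm.reachable.trans hw
  have hne := hadj.dist_ne_dist_of_coloring c hw
  have huv : G.dist u v = 1 := dist_eq_one_iff_adj.mpr hadj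
  have hvu : G.dist v u = 1 := dist_eq_one_iff_adj.mpr hadj.symm
  have hle_u := hadj.reachable.dist_triangle_left w
  have hle_v := hadj.symm.reachable.dist_triangle_left w
  rcases Nat.lt_or_gt_of_ne hne with hlt | hgt
  · exact .inr (hadj.symm.mem_gpInterval_of_dist_eq_succ hw (by omega))
  · exact .inl (hadj.mem_gpInterval_of_dist_eq_succ hvw (by omega))

end SimpleGraph

/-- in a connected bipartite graph, a general position set of size
at least 3 is independent. -/
theorem stmt1 {V : Type*} (G : SimpleGraph V) (hG : G.Connected)
    (hbip : G.Colorable 2) (S : Set V) (hS : IsGPSet G S)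
    (hcard : 3 ≤ S.ncard) :
    ∀ u ∈ S, ∀ v ∈ S, ¬ G.Adj u v := by
  intro u hu v hv hadj
  obtain ⟨w, hw, hwu, hwv⟩ := Set.exists_mem_ne_ne_of_two_lt_ncard hcard u v
  rcases hadj.mem_gpInterval_or_mem_gpInterval hbip (hG.preconnected u w) with h | h
  · exact hS u hu v hv w hw hadj.ne hwv.symm hwu.symm h
  · exact hS v hv u hu w hw hadj.ne.symm hwu.symm hwv.symm h
end

section
/- The only connected graphs G with gp(G) = 2 are paths and the 4-cycle C₄. -/
open SimpleGraph

/-!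
If `gp(G) ≤ 2`, then of any three distinct vertices one lies on a geodesic between the other two.
Fix a diametral pair `r, s`. Then every vertex lies on a geodesic from `r` to `s`, and two distinct
vertices `x, y` at the same distance `k` from `r` satisfy `d(x, y) = diam G = 2k`. If such a pair
exists, their predecessors on geodesics from `r` either form such a pair at distance `k - 1`, or
coincide and give `d(x, y) ≤ 2`; either way `k = 1`, and `G` is the 4-cycle `r x s y`. Otherwise
`v ↦ d(r, v)` is injective, and it is an isomorphism onto the path `0, 1, …, diam G`.
-/

namespace SimpleGraph

variable {V : Type*} {G : SimpleGraph V}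

lemma dist_add_dist_eq_of_mem_gpInterval {u w x : V} (hx : x ∈ gpInterval G u w) :
    G.dist u x + G.dist x w = G.dist u w := by
  classical
  obtain ⟨p, hp, hx⟩ := hx
  have hsplit := congrArg Walk.length (p.take_spec hx)
  rw [Walk.length_append] at hsplit
  have := dist_le (p.takeUntil x hx)
  have := dist_le (p.dropUntil x hx)
  have := (p.dropUntil x hx).reachable.dist_triangle_right u
  omega

lemma card_le_gpNumber [Fintype V] {S : Finset V} (hS : IsGPSet G S) : S.card ≤ gpNumber G :=
  le_csSup ⟨Fintype.card V, by rintro n ⟨T, -, rfl⟩; exact T.card_le_univ⟩ ⟨S, hS, rfl⟩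

lemma Connected.exists_adj_dist_eq_of_dist_eq_add_one (hG : G.Connected) {r v : V} {n : ℕ}
    (hv : G.dist r v = n + 1) : ∃ z, G.Adj z v ∧ G.dist r z = n := by
  obtain ⟨p, hp⟩ := hG.exists_walk_length_eq_dist r v
  have hnil : ¬ p.Nil := by
    rw [← Walk.length_eq_zero_iff]; omega
  refine ⟨p.penultimate, Walk.adj_penultimate hnil, le_antisymm ?_ ?_⟩
  · have := dist_le p.dropLast
    rw [Walk.length_dropLast] at this
    omega
  · have := hG.dist_triangle (u := r) (v := p.penultimate) (w := v)
    rw [dist_eq_one_iff_adj.mpr (Walk.adj_penultimate hnil)] at this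
    omega

lemma Connected.exists_dist_eq_of_le_dist (hG : G.Connected) {r v : V} {n : ℕ}
    (hn : n ≤ G.dist r v) : ∃ w, G.dist r w = n := by
  induction h : G.dist r v - n generalizing v with
  | zero => exact ⟨v, by omega⟩
  | succ k ih =>
    obtain ⟨z, -, hz⟩ :=
      hG.exists_adj_dist_eq_of_dist_eq_add_one (r := r) (v := v) (n := G.dist r v - 1) (by omega)
    exact ih (v := z) (by omega) (by omega)

lemma Connected.adj_iff_of_injective_dist (hG : G.Connected) {r : V}
    (hinj : Function.Injective (G.dist r)) {a b : V} :
    G.Adj a b ↔ G.dist r a + 1 = G.dist r b ∨ G.dist r b + 1 = G.dist r a := by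
  have adj_of_succ {a b : V} (h : G.dist r a + 1 = G.dist r b) : G.Adj a b := by
    obtain ⟨z, hzb, hz⟩ := hG.exists_adj_dist_eq_of_dist_eq_add_one h.symm
    rwa [← hinj hz]
  refine ⟨fun hab => ?_, fun h => h.elim adj_of_succ (fun h => (adj_of_succ h).symm)⟩
  have hne : G.dist r a ≠ G.dist r b := fun h => hab.ne (hinj h)
  rcases hab.diff_dist_adj (u := r) with h | h | h <;> omega

theorem Connected.nonempty_iso_pathGraph_of_injective_dist (hG : G.Connected) {r s : V}
    (hinj : Function.Injective (G.dist r)) (hs : ∀ v, G.dist r v ≤ G.dist r s) :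
    Nonempty (G ≃g pathGraph (G.dist r s + 1)) := by
  let f : V → Fin (G.dist r s + 1) := fun v => ⟨G.dist r v, Nat.lt_succ_of_le (hs v)⟩
  have hf : f.Bijective := by
    refine ⟨fun a b hab => hinj (congrArg Fin.val hab), fun i => ?_⟩
    obtain ⟨w, hw⟩ := hG.exists_dist_eq_of_le_dist (Nat.le_of_lt_succ i.isLt)
    exact ⟨w, Fin.ext hw⟩
  exact ⟨⟨Equiv.ofBijective f hf, by
    intro a b
    simp only [Equiv.ofBijective_apply, pathGraph_adj, f]
    exact (hG.adj_iff_of_injective_dist hinj).symm⟩⟩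

theorem nonempty_iso_cycleGraph_four {a b c d : V} (hcover : ∀ v, v = a ∨ v = b ∨ v = c ∨ v = d)
    (hab : G.Adj a b) (hbc : G.Adj b c) (hcd : G.Adj c d) (hda : G.Adj d a)
    (hac : a ≠ c) (hbd : b ≠ d) (hnac : ¬ G.Adj a c) (hnbd : ¬ G.Adj b d) :
    Nonempty (G ≃g cycleGraph 4) := by
  let f : Fin 4 → V := ![a, b, c, d]
  have hf : f.Bijective := by
    refine ⟨fun i j hij => ?_, fun v => ?_⟩
    · fin_cases i <;> fin_cases j <;>
        simp_all [f, hab.ne, hbc.ne, hcd.ne, hda.ne, hab.ne.symm, hbc.ne.symm, hcd.ne.symm,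
          hda.ne.symm, hac.symm, hbd.symm]
    · rcases hcover v with rfl | rfl | rfl | rfl
      exacts [⟨0, rfl⟩, ⟨1, rfl⟩, ⟨2, rfl⟩, ⟨3, rfl⟩]
  refine ⟨(Iso.symm ⟨Equiv.ofBijective f hf, fun {i j} => ?_⟩ : G ≃g cycleGraph 4)⟩
  fin_cases i <;> fin_cases j <;>
    simp [f, cycleGraph_adj, G.adj_comm, hab, hbc, hcd, hda.symm, hnac, hnbd] <;> decide

lemma Connected.dist_le_diam [Finite V] (hG : G.Connected) {u v : V} : G.dist u v ≤ G.diam :=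
  have := hG.nonempty
  SimpleGraph.dist_le_diam (connected_iff_ediam_ne_top.mp hG)

def HasCollinearTriples (G : SimpleGraph V) : Prop :=
  ∀ ⦃u v w : V⦄, u ≠ v → v ≠ w → w ≠ u →
    G.dist u v + G.dist v w = G.dist u w ∨ G.dist v w + G.dist w u = G.dist v u ∨
      G.dist w u + G.dist u v = G.dist w v

lemma hasCollinearTriples_of_gpNumber_le_two [Fintype V] (hgp : gpNumber G ≤ 2) :
    G.HasCollinearTriples := by
  intro u v w huv hvw hwu
  classical
  by_contra! h
  have hgp3 : IsGPSet G ↑({u, v, w} : Finset V) := by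
    intro a ha b hb c hc hab hbc hac hmem
    have := dist_add_dist_eq_of_mem_gpInterval hmem
    simp only [Finset.coe_insert, Finset.coe_singleton, Set.mem_insert_iff,
      Set.mem_singleton_iff] at ha hb hc
    rcases ha with rfl | rfl | rfl <;> rcases hb with rfl | rfl | rfl <;>
      rcases hc with rfl | rfl | rfl <;> grind [dist_comm]
  have := card_le_gpNumber hgp3
  rw [Finset.card_insert_of_notMem (by simp [huv, hwu.symm]), Finset.card_pair hvw] at this
  omega

namespace HasCollinearTriples

variable (hcol : G.HasCollinearTriples) (hG : G.Connected) {r x y : V}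
include hcol hG

lemma dist_eq_two_mul (hxy : x ≠ y) (h : G.dist r x = G.dist r y) :
    G.dist x y = 2 * G.dist r x := by
  have hrx : r ≠ x := by rintro rfl; exact hxy (hG.dist_eq_zero_iff.mp (h.symm.trans dist_self))
  have hry : r ≠ y := by rintro rfl; exact hxy (hG.dist_eq_zero_iff.mp (h.trans dist_self)).symm
  have := hG.pos_dist_of_ne hxy
  have := hG.pos_dist_of_ne hxy.symm
  rcases hcol hrx hxy hry.symm with h' | h' | h' <;> grind [dist_comm]

variable [Finite V] {s : V} (hrs : G.dist r s = G.diam)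
include hrs

lemma dist_add_dist_eq_diam : G.dist r x + G.dist x s = G.diam := by
  rw [← hrs]
  by_cases hxr : x = r
  · simp [hxr]
  by_cases hxs : x = s
  · simp [hxs]
  have : G.dist x r ≤ G.dist r s := hrs ▸ hG.dist_le_diam
  have : G.dist s x ≤ G.dist r s := hrs ▸ hG.dist_le_diam
  have := hG.pos_dist_of_ne hxr
  have := hG.pos_dist_of_ne hxs
  have hrs' : r ≠ s := by
    rintro rfl
    have := hG.dist_le_diam (u := x) (v := r)
    rw [← hrs, dist_self] at this
    omega
  rcases hcol (Ne.symm hxr) hxs hrs'.symm with h | h | h <;> grind [dist_comm]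

lemma diam_eq_two_mul (hxy : x ≠ y) (h : G.dist r x = G.dist r y) :
    G.diam = 2 * G.dist r x := by
  rw [← hrs]
  have hxy' := hcol.dist_eq_two_mul hG hxy h
  have hxs := hcol.dist_add_dist_eq_diam hG (x := x) hrs
  have hys := hcol.dist_add_dist_eq_diam hG (x := y) hrs
  have := hG.pos_dist_of_ne hxy
  have : G.dist x y ≤ G.dist r s := hrs ▸ hG.dist_le_diam
  have hxs' : x ≠ s := by rintro rfl; omega
  have hys' : y ≠ s := by rintro rfl; grind [dist_comm]
  rcases hcol hxs' hys'.symm hxy.symm with h' | h' | h' <;> grind [dist_comm]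

lemma dist_eq_one (hxy : x ≠ y) (h : G.dist r x = G.dist r y) : G.dist r x = 1 := by
  obtain ⟨m, hm⟩ : ∃ m, G.dist r x = m + 1 := by
    have := hcol.dist_eq_two_mul hG hxy h
    have := hG.pos_dist_of_ne hxy
    exact ⟨G.dist r x - 1, by omega⟩
  obtain ⟨z, hzx, hz⟩ := hG.exists_adj_dist_eq_of_dist_eq_add_one hm
  obtain ⟨z', hzy, hz'⟩ := hG.exists_adj_dist_eq_of_dist_eq_add_one (h ▸ hm)
  by_cases hzz : z = z'
  · subst hzz
    have := hcol.dist_eq_two_mul hG hxy h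
    have hxz : G.dist x z = 1 := dist_eq_one_iff_adj.mpr hzx.symm
    have hzy : G.dist z y = 1 := dist_eq_one_iff_adj.mpr hzy
    have := hG.dist_triangle (u := x) (v := z) (w := y)
    omega
  · have := hcol.diam_eq_two_mul hG hrs hxy h
    have := hcol.diam_eq_two_mul hG hrs hzz (hz.trans hz'.symm)
    omega

lemma nonempty_iso_cycleGraph_four_of_dist_eq (hxy : x ≠ y) (h : G.dist r x = G.dist r y) :
    Nonempty (G ≃g cycleGraph 4) := by
  have hrx := hcol.dist_eq_one hG hrs hxy h
  have hrs2 : G.dist r s = 2 := by rw [hrs, hcol.diam_eq_two_mul hG hrs hxy h, hrx]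
  have hxs := hcol.dist_add_dist_eq_diam hG (x := x) hrs
  have hys := hcol.dist_add_dist_eq_diam hG (x := y) hrs
  have hxy2 := hcol.dist_eq_two_mul hG hxy h
  have hcover : ∀ w, w = r ∨ w = x ∨ w = s ∨ w = y := by
    by_contra! ⟨w, hwr, hwx, hws, hwy⟩
    have : G.dist r w ≤ 2 := hrs2 ▸ hrs ▸ hG.dist_le_diam
    have := hG.pos_dist_of_ne (Ne.symm hwr)
    by_cases hw1 : G.dist r w = 1
    · have := hcol.dist_eq_two_mul hG hwx (hw1.trans hrx.symm)
      have := hcol.dist_eq_two_mul hG hwy (hw1.trans (h ▸ hrx).symm)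
      rcases hcol hwx hxy (Ne.symm hwy) with h' | h' | h' <;> grind [dist_comm]
    · exact hw1 (hcol.dist_eq_one hG hrs hws (by omega))
  have adj_of {u v : V} (huv : G.dist u v = 1) : G.Adj u v := dist_eq_one_iff_adj.mp huv
  refine nonempty_iso_cycleGraph_four hcover (adj_of hrx) (adj_of (by omega))
    (adj_of (by rw [dist_comm]; omega)) (adj_of (by rw [dist_comm]; omega)) ?_ hxy ?_ ?_
  · rintro rfl; simp at hrs2
  · rw [← dist_eq_one_iff_adj]; omega
  · rw [← dist_eq_one_iff_adj]; omega

end HasCollinearTriples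

end SimpleGraph

/-- the only connected graphs with general position number 2 are
paths and the 4-cycle. -/
theorem stmt2 {V : Type*} [Fintype V] (G : SimpleGraph V) (hG : G.Connected)
    (h2 : gpNumber G = 2) :
    (∃ n : ℕ, Nonempty (G ≃g pathGraph n)) ∨ Nonempty (G ≃g cycleGraph 4) := by
  have := hG.nonempty
  have hcol := hasCollinearTriples_of_gpNumber_le_two h2.le
  obtain ⟨r, s, hrs⟩ := G.exists_dist_eq_diam
  by_cases hinj : Function.Injective (G.dist r)
  · exact .inl ⟨_, hG.nonempty_iso_pathGraph_of_injective_dist hinj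
      fun _ => hrs.symm ▸ hG.dist_le_diam⟩
  · obtain ⟨x, y, h, hxy⟩ := Function.not_injective_iff.mp hinj
    exact .inr (hcol.nonempty_iso_cycleGraph_four_of_dist_eq hG hrs hxy h)
end

section
/- Let G and H be connected graphs and let R be a general position set of G □ H. If u = (g,h) ∈ R, then either the H-layer through g intersects R only in u, or the G-layer through h intersects R only in u. -/
open SimpleGraph

/-!
Suppose `u = (g, h)` shares its `H`-layer with `x = (g, h')` and its `G`-layer with
`y = (g', h)`, where `x, y ≠ u`. Since distances in `G □ H` add up coordinatewise, going from
`x` to `u` inside the `H`-layer and then from `u` to `y` inside the `G`-layer is a shortest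
`x,y`-path, so `x, u, y` lie on a common geodesic.
-/

namespace SimpleGraph

variable {α β : Type*} {G : SimpleGraph α} {H : SimpleGraph β}

lemma dist_boxProd {x y : α × β} (hG : G.Reachable x.1 y.1) (hH : H.Reachable x.2 y.2) :
    (G □ H).dist x y = G.dist x.1 y.1 + H.dist x.2 y.2 := by
  simp only [dist, edist_boxProd,
    ENat.toNat_add (edist_ne_top_iff_reachable.2 hG) (edist_ne_top_iff_reachable.2 hH)]

lemma fst_snd_mem_gpInterval_boxProd {x y : α × β} (hG : G.Reachable x.1 y.1)
    (hH : H.Reachable x.2 y.2) : (x.1, y.2) ∈ gpInterval (G □ H) x y := by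
  obtain ⟨p, hp⟩ := hH.exists_walk_length_eq_dist
  obtain ⟨q, hq⟩ := hG.exists_walk_length_eq_dist
  refine ⟨(p.boxProdRight G x.1).append (q.boxProdLeft H y.2), ?_, ?_⟩
  · have hp' : (p.boxProdRight G x.1).length = p.length := Walk.length_map _ _
    have hq' : (q.boxProdLeft H y.2).length = q.length := Walk.length_map _ _
    rw [dist_boxProd hG hH, Walk.length_append, hp', hq', hp, hq, add_comm]
  · exact Walk.mem_support_append_iff _ _ |>.2 (Or.inr (Walk.start_mem_support _))

end SimpleGraph

/-- a vertex of a general position set of a Cartesian product is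
alone in its `H`-layer or alone in its `G`-layer. -/
theorem stmt7 {α β : Type*} (G : SimpleGraph α) (H : SimpleGraph β)
    (hG : G.Connected) (hH : H.Connected) (R : Set (α × β))
    (hR : IsGPSet (G □ H) R) (g : α) (h : β) (hu : (g, h) ∈ R) :
    (∀ x ∈ R, x.1 = g → x = (g, h)) ∨ (∀ x ∈ R, x.2 = h → x = (g, h)) := by
  by_contra! ⟨⟨x, hx, hx₁, hxu⟩, ⟨y, hy, hy₂, hyu⟩⟩
  have hy₁ : y.1 ≠ g := fun hy₁ => hyu (Prod.ext hy₁ hy₂)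
  have hxy : x ≠ y := fun hxy => hy₁ (hxy ▸ hx₁)
  have hcorner : (g, h) ∈ gpInterval (G □ H) x y := by
    simpa [hx₁, hy₂] using fst_snd_mem_gpInterval_boxProd (hG.preconnected x.1 y.1)
      (hH.preconnected x.2 y.2)
  exact hR x hx (g, h) hu y hy hxu (Ne.symm hyu) hxy hcorner
end

section
/- For vertices (g,h) and (g',h') of the lexicographic product G ∘ H with G and H connected: if g ≠ g' then d_{G∘H}((g,h),(g',h')) = d_G(g,g'); if g = g' and g has a neighbor in G then d_{G∘H}((g,h),(g',h')) = min{d_H(h,h'), 2}. -/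
open SimpleGraph

/-!
A walk in `G ∘ H` projects to a walk in `G` that is no longer, since edges inside a fiber
collapse to a single vertex. Conversely, a `G`-walk from `g` to `g' ≠ g` lifts to a walk of
the same length between any two lifts of its ends: its first edge can jump to any height `h'`,
and the rest runs in the copy of `G` at height `h'`. Within the fiber over `g`, the detour
through `(w, h')` for a neighbour `w` of `g` has length 2, and distances 0 and 1 are realised
exactly as in `H`.
-/

namespace SimpleGraph

section AdjOrEq

variable {V W : Type*} {G : SimpleGraph V} {G' : SimpleGraph W}

lemma Walk.exists_length_le_of_adj_or_eq (f : V → W)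
    (hf : ∀ ⦃x y⦄, G.Adj x y → G'.Adj (f x) (f y) ∨ f x = f y) :
    ∀ {u v : V} (p : G.Walk u v), ∃ q : G'.Walk (f u) (f v), q.length ≤ p.length
  | _, _, .nil => ⟨.nil, le_rfl⟩
  | _, _, .cons hxy p => by
    obtain ⟨q, hq⟩ := exists_length_le_of_adj_or_eq f hf p
    rcases hf hxy with hadj | heq
    · exact ⟨.cons hadj q, by simpa using hq⟩
    · exact ⟨q.copy heq.symm rfl, by simp only [Walk.length_copy, Walk.length_cons]; omega⟩

lemma Reachable.dist_le_of_adj_or_eq (f : V → W)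
    (hf : ∀ ⦃x y⦄, G.Adj x y → G'.Adj (f x) (f y) ∨ f x = f y) {u v : V}
    (huv : G.Reachable u v) : G'.dist (f u) (f v) ≤ G.dist u v := by
  obtain ⟨p, hp⟩ := huv.exists_walk_length_eq_dist
  obtain ⟨q, hq⟩ := p.exists_length_le_of_adj_or_eq f hf
  exact (dist_le q).trans (hp ▸ hq)

end AdjOrEq

section LexProd

variable {α β : Type*} {G : SimpleGraph α} {H : SimpleGraph β}

@[simp]
lemma lexProd_adj {x y : α × β} :
    (lexProd G H).Adj x y ↔ G.Adj x.1 y.1 ∨ x.1 = y.1 ∧ H.Adj x.2 y.2 :=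
  Iff.rfl

def lexProdLeft (b : β) : G →g lexProd G H where
  toFun a := (a, b)
  map_rel' := Or.inl

lemma exists_lexProd_walk_length_eq {g g' : α} (p : G.Walk g g') (hp : ¬p.Nil) (h h' : β) :
    ∃ q : (lexProd G H).Walk (g, h) (g', h'), q.length = p.length := by
  cases p with
  | nil => exact absurd .nil hp
  | cons hadj p =>
    exact ⟨.cons (Or.inl hadj) (p.map (lexProdLeft h')), congrArg (· + 1) (p.length_map _)⟩

lemma lexProd_dist_of_ne {g g' : α} (hgg' : G.Reachable g g') (hne : g ≠ g') (h h' : β) :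
    (lexProd G H).dist (g, h) (g', h') = G.dist g g' := by
  obtain ⟨p, hp⟩ := hgg'.exists_walk_length_eq_dist
  obtain ⟨q, hq⟩ := exists_lexProd_walk_length_eq p (fun hnil => hne hnil.eq) h h'
  refine le_antisymm (hp ▸ hq ▸ dist_le q) ?_
  exact Reachable.dist_le_of_adj_or_eq (G := lexProd G H) Prod.fst
    (fun _ _ hxy => hxy.imp id And.left) ⟨q⟩

lemma lexProd_dist_of_adj {g w : α} (hw : G.Adj g w) {h h' : β} (hhh' : H.Reachable h h') :
    (lexProd G H).dist (g, h) (g, h') = min (H.dist h h') 2 := by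
  by_cases heq : h = h'
  · subst heq
    simp
  by_cases hadj : H.Adj h h'
  · rw [dist_eq_one_iff_adj.2 hadj, dist_eq_one_iff_adj.2 (Or.inr ⟨rfl, hadj⟩)]
    rfl
  rw [min_eq_right (hhh'.one_lt_dist_of_ne_of_not_adj heq hadj)]
  let detour : (lexProd G H).Walk (g, h) (g, h') :=
    .cons (v := (w, h')) (Or.inl hw) (.cons (Or.inl hw.symm) .nil)
  refine le_antisymm (dist_le detour) ?_
  exact Reachable.one_lt_dist_of_ne_of_not_adj ⟨detour⟩ (by simpa using heq)
    (by simpa using hadj)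

end LexProd

end SimpleGraph

/-- distances in the lexicographic product. -/
theorem stmt12 {α β : Type*} (G : SimpleGraph α) (H : SimpleGraph β)
    (hG : G.Connected) (hH : H.Connected) (g g' : α) (h h' : β) :
    (g ≠ g' → (lexProd G H).dist (g, h) (g', h') = G.dist g g') ∧
    (g = g' → (∃ w, G.Adj g w) →
      (lexProd G H).dist (g, h) (g', h') = min (H.dist h h') 2) := by
  refine ⟨fun hne => lexProd_dist_of_ne (hG g g') hne h h', ?_⟩
  rintro rfl ⟨w, hw⟩
  exact lexProd_dist_of_adj hw (hH h h')
end

section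
/- Let G be a connected graph and n ≥ 1. A set S ⊆ V(G ∘ Kₙ) is a maximal general position set of G ∘ Kₙ if and only if S = S_G × V(Kₙ) for some maximal general position set S_G of G. -/
open SimpleGraph

/-! A geodesic of `G ∘ Kₙ` joining two different fibres projects onto a geodesic of `G` of the
same length through the same vertices of `G`, so it meets each fibre at most once, while two
vertices of one fibre are adjacent. Hence `T × V(Kₙ)` is in general position whenever `T`
is, and the projection of a general position set of `G ∘ Kₙ` is again in general position.
A maximal set `S` therefore equals `π(S) × V(Kₙ)`, and maximality passes between `S` and `π(S)`
in both directions. -/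

namespace SimpleGraph

variable {α β : Type*} {G : SimpleGraph α} {H : SimpleGraph β}

def lexProdLayer (b : β) : G →g lexProd G H where
  toFun x := (x, b)
  map_rel' := Or.inl

lemma gpInterval_subset_of_adj {V : Type*} {G : SimpleGraph V} {u w : V} (huw : G.Adj u w) :
    gpInterval G u w ⊆ {u, w} := by
  rintro v ⟨p, hp, hv⟩
  rw [dist_eq_one_iff_adj.mpr huw] at hp
  cases p with
  | nil => simp at hp
  | cons _ q =>
    cases q with
    | nil => simpa using hv
    | cons _ _ => simp at hp

namespace Walk

open scoped Classical in
/-- Projection of a walk onto `G`, dropping the steps that stay inside a fibre. -/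
noncomputable def lexProdFst : ∀ {u v : α × β}, (lexProd G H).Walk u v → G.Walk u.1 v.1
  | _, _, .nil => .nil
  | u, _, .cons (v := m) e q =>
      if h : G.Adj u.1 m.1 then .cons h q.lexProdFst
      else q.lexProdFst.copy (e.resolve_left h).1.symm rfl

lemma length_lexProdFst_le : ∀ {u v : α × β} (p : (lexProd G H).Walk u v),
    p.lexProdFst.length ≤ p.length
  | _, _, .nil => le_rfl
  | u, _, .cons (v := m) _ q => by
    by_cases h : G.Adj u.1 m.1
    · simpa [lexProdFst, h] using q.length_lexProdFst_le
    · simpa [lexProdFst, h] using q.length_lexProdFst_le.trans (Nat.le_succ _)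

lemma support_lexProdFst_sublist : ∀ {u v : α × β} (p : (lexProd G H).Walk u v),
    p.lexProdFst.support.Sublist (p.support.map Prod.fst)
  | _, _, .nil => by simp [lexProdFst]
  | u, _, .cons (v := m) _ q => by
    by_cases h : G.Adj u.1 m.1
    · simpa [lexProdFst, h] using q.support_lexProdFst_sublist.cons_cons u.1
    · simpa [lexProdFst, h] using q.support_lexProdFst_sublist.cons u.1

end Walk

lemma exists_walk_lexProd_length_eq {a c : α} (p : G.Walk a c) (hp : ¬p.Nil) (b b' : β) :
    ∃ w : (lexProd G H).Walk (a, b) (c, b'), w.length = p.length := by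
  cases p with
  | nil => exact absurd .nil hp
  | cons e q => exact ⟨.cons (v := (_, b')) (Or.inl e) (q.map (lexProdLayer b')),
    congrArg (· + 1) (q.length_map _)⟩

lemma dist_lexProd_of_ne {a c : α} (hac : a ≠ c) (b b' : β) :
    (lexProd G H).dist (a, b) (c, b') = G.dist a c := by
  by_cases hr : G.Reachable a c
  · obtain ⟨p, hp⟩ := hr.exists_walk_length_eq_dist
    obtain ⟨w, hw⟩ := exists_walk_lexProd_length_eq (H := H) p (Walk.not_nil_of_ne hac) b b'
    obtain ⟨P, hP⟩ := Reachable.exists_walk_length_eq_dist (G := lexProd G H) ⟨w⟩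
    refine le_antisymm ((dist_le w).trans (hw.trans hp).le) ?_
    calc G.dist a c ≤ P.lexProdFst.length := dist_le _
      _ ≤ P.length := P.length_lexProdFst_le
      _ = _ := hP
  · have hr' : ¬(lexProd G H).Reachable (a, b) (c, b') := fun ⟨P⟩ => hr ⟨P.lexProdFst⟩
    rw [dist_eq_zero_of_not_reachable hr, dist_eq_zero_of_not_reachable hr']

/-- A geodesic between different fibres projects onto a geodesic of `G` visiting the same
vertices of `G` in the same order; in particular it meets every fibre at most once. -/
lemma Walk.lexProdFst_of_length_eq_dist {a c : α} (hac : a ≠ c) {b b' : β}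
    (P : (lexProd G H).Walk (a, b) (c, b')) (hP : P.length = (lexProd G H).dist (a, b) (c, b')) :
    P.lexProdFst.length = G.dist a c ∧ P.lexProdFst.support = P.support.map Prod.fst := by
  rw [dist_lexProd_of_ne hac] at hP
  have hlen : P.lexProdFst.length = P.length :=
    le_antisymm P.length_lexProdFst_le (hP ▸ dist_le _)
  refine ⟨hlen.trans hP, P.support_lexProdFst_sublist.eq_of_length ?_⟩
  simp [hlen]

lemma mem_gpInterval_lexProd_of_ne {a c : α} (hac : a ≠ c) {b b' : β} {v : α × β}
    (hv : v ∈ gpInterval (lexProd G H) (a, b) (c, b')) :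
    v.1 ∈ gpInterval G a c ∧ (v.1 = a → v = (a, b)) ∧ (v.1 = c → v = (c, b')) := by
  obtain ⟨P, hP, hvP⟩ := hv
  obtain ⟨hlen, hsupp⟩ := P.lexProdFst_of_length_eq_dist hac hP
  have hnodup : (P.support.map Prod.fst).Nodup :=
    hsupp ▸ (P.lexProdFst.isPath_of_length_eq_dist hlen).support_nodup
  refine ⟨⟨P.lexProdFst, hlen, hsupp ▸ List.mem_map_of_mem hvP⟩, fun hva => ?_, fun hvc => ?_⟩
  · exact List.inj_on_of_nodup_map hnodup hvP P.start_mem_support hva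
  · exact List.inj_on_of_nodup_map hnodup hvP P.end_mem_support hvc

lemma mk_mem_gpInterval_lexProd [DecidableEq α] {a b c : α} (hac : a ≠ c) (hba : b ≠ a)
    (hbc : b ≠ c) (hb : b ∈ gpInterval G a c) (x y z : β) :
    (b, y) ∈ gpInterval (lexProd G H) (a, x) (c, z) := by
  obtain ⟨p, hp, hbp⟩ := hb
  obtain ⟨w₁, hw₁⟩ := exists_walk_lexProd_length_eq (H := H) (p.takeUntil b hbp)
    (Walk.not_nil_of_ne hba.symm) x y
  obtain ⟨w₂, hw₂⟩ := exists_walk_lexProd_length_eq (H := H) (p.dropUntil b hbp)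
    (Walk.not_nil_of_ne hbc) y z
  refine ⟨w₁.append w₂, ?_, Walk.mem_support_append_iff _ _ |>.mpr (.inl w₁.end_mem_support)⟩
  rw [Walk.length_append, hw₁, hw₂, ← Walk.length_append, p.take_spec hbp, hp,
    dist_lexProd_of_ne hac]

lemma IsGPSet.image_fst {S : Set (α × β)} (hS : IsGPSet (lexProd G H) S) :
    IsGPSet G (Prod.fst '' S) := by
  classical
  rintro a ⟨⟨a, x⟩, ha, rfl⟩ b ⟨⟨b, y⟩, hb, rfl⟩ c ⟨⟨c, z⟩, hc, rfl⟩ hab hbc hac hmem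
  exact hS _ ha _ hb _ hc (by simp [hab]) (by simp [hbc]) (by simp [hac])
    (mk_mem_gpInterval_lexProd hac hab.symm hbc hmem x y z)

lemma IsGPSet.prod_univ {T : Set α} (hT : IsGPSet G T) :
    IsGPSet (lexProd G (⊤ : SimpleGraph β)) (T ×ˢ Set.univ) := by
  rintro ⟨a, x⟩ ⟨ha, -⟩ ⟨b, y⟩ ⟨hb, -⟩ ⟨c, z⟩ ⟨hc, -⟩ hab hbc hac hmem
  by_cases hac' : a = c
  · subst hac'
    have hadj : (lexProd G (⊤ : SimpleGraph β)).Adj (a, x) (a, z) :=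
      Or.inr ⟨rfl, fun hxz => hac (Prod.ext rfl hxz)⟩
    rcases gpInterval_subset_of_adj hadj hmem with h | h
    · exact hab h.symm
    · exact hbc h
  · obtain ⟨hb', hba, hbc'⟩ := mem_gpInterval_lexProd_of_ne hac' hmem
    exact hT a ha b hb c hc (fun h => hab (hba h.symm).symm) (fun h => hbc (hbc' h)) hac' hb'

lemma IsMaximalGPSet.eq_image_fst_prod_univ {S : Set (α × β)}
    (hS : IsMaximalGPSet (lexProd G ⊤) S) : S = (Prod.fst '' S) ×ˢ Set.univ :=
  (hS.2 _ hS.1.image_fst.prod_univ fun x hx => ⟨⟨x, hx, rfl⟩, trivial⟩).symm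

variable [Nonempty β]

theorem isMaximalGPSet_lexProd_top_iff {S : Set (α × β)} :
    IsMaximalGPSet (lexProd G ⊤) S ↔
      ∃ SG : Set α, IsMaximalGPSet G SG ∧ S = SG ×ˢ Set.univ := by
  constructor
  · intro hS
    refine ⟨Prod.fst '' S, ⟨hS.1.image_fst, fun T hT hST => ?_⟩, hS.eq_image_fst_prod_univ⟩
    have hTS : T ×ˢ Set.univ = S := hS.2 _ hT.prod_univ <| hS.eq_image_fst_prod_univ ▸
      Set.prod_mono hST subset_rfl
    rw [← hTS, Set.fst_image_prod T (Set.univ_nonempty (α := β))]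
  · rintro ⟨SG, hSG, rfl⟩
    refine ⟨hSG.1.prod_univ, fun T hT hST => (Set.Subset.antisymm ?_ hST)⟩
    have hT' : Prod.fst '' T = SG := hSG.2 _ hT.image_fst <|
      Set.fst_image_prod SG (Set.univ_nonempty (α := β)) ▸ Set.image_mono hST
    exact fun x hx => ⟨hT' ▸ ⟨x, hx, rfl⟩, trivial⟩

end SimpleGraph

theorem stmt14_general {α : Type*} (G : SimpleGraph α) (n : ℕ)
    (hn : 1 ≤ n) (S : Set (α × Fin n)) :
    IsMaximalGPSet (lexProd G (⊤ : SimpleGraph (Fin n))) S ↔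
      ∃ SG : Set α, IsMaximalGPSet G SG ∧ S = SG ×ˢ (Set.univ : Set (Fin n)) :=
  have : Nonempty (Fin n) := ⟨⟨0, hn⟩⟩
  SimpleGraph.isMaximalGPSet_lexProd_top_iff

/-- maximal general position sets of `G ∘ Kₙ` are exactly the
sets `S_G × V(Kₙ)` for maximal general position sets `S_G` of `G`. -/
theorem stmt14 {α : Type*} (G : SimpleGraph α) (hG : G.Connected) (n : ℕ)
    (hn : 1 ≤ n) (S : Set (α × Fin n)) :
    IsMaximalGPSet (lexProd G (⊤ : SimpleGraph (Fin n))) S ↔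
      ∃ SG : Set α, IsMaximalGPSet G SG ∧ S = SG ×ˢ (Set.univ : Set (Fin n)) :=
  stmt14_general G n hn S
end

section
/- In a connected bipartite graph of order at least 2, every pair of adjacent vertices forms a maximal general position set. -/
open SimpleGraph

/-! Distances from any vertex `w` to the ends of an edge `uv` of a bipartite graph have different
parities, so, in a connected bipartite graph, they differ by exactly one. The nearer end then lies
on a shortest path from `w` to the farther end, so no vertex can be added to `{u, v}`. -/

namespace SimpleGraph

variable {V : Type*} {G : SimpleGraph V} {u v w : V}

theorem Colorable.dist_ne_dist_of_adj (hc : G.Colorable 2) (hwu : G.Reachable w u)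
    (huv : G.Adj u v) : G.dist w u ≠ G.dist w v := by
  intro hdist
  obtain ⟨p, hp⟩ := hwu.exists_walk_length_eq_dist
  obtain ⟨q, hq⟩ := (hwu.trans huv.reachable).exists_walk_length_eq_dist
  have hcycle := two_colorable_iff_forall_loop_even.mp hc w ((p.concat huv).append q.reverse)
  rw [Walk.length_append, Walk.length_concat, Walk.length_reverse, hp, hq, hdist] at hcycle
  exact Nat.not_even_iff_odd.mpr (by simp) hcycle

theorem Colorable.dist_eq_dist_add_one_of_adj (hc : G.Colorable 2) (hwu : G.Reachable w u)
    (huv : G.Adj u v) : G.dist w v = G.dist w u + 1 ∨ G.dist w u = G.dist w v + 1 := by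
  have hne := hc.dist_ne_dist_of_adj hwu huv
  rcases huv.diff_dist_adj (u := w) with h | h | h <;> omega

end SimpleGraph

theorem mem_gpInterval_of_adj {V : Type*} {G : SimpleGraph V} {u v w : V}
    (hwu : G.Reachable w u) (huv : G.Adj u v) (hdist : G.dist w v = G.dist w u + 1) :
    u ∈ gpInterval G w v := by
  obtain ⟨p, hp⟩ := hwu.exists_walk_length_eq_dist
  refine ⟨p.concat huv, by rw [Walk.length_concat, hp, hdist], ?_⟩
  simp [Walk.concat_eq_append]

theorem isGPSet_pair {V : Type*} (G : SimpleGraph V) (u v : V) : IsGPSet G {u, v} := by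
  rintro a (rfl | rfl) b (rfl | rfl) c (rfl | rfl) <;> simp

theorem IsGPSet.mem_pair_of_adj {V : Type*} {G : SimpleGraph V} {T : Set V} {u v w : V}
    (hT : IsGPSet G T) (hc : G.Colorable 2) (huv : G.Adj u v) (hu : u ∈ T) (hv : v ∈ T)
    (hw : w ∈ T) (hwu : G.Reachable w u) : w ∈ ({u, v} : Set V) := by
  by_contra hnot
  simp only [Set.mem_insert_iff, Set.mem_singleton_iff, not_or] at hnot
  obtain ⟨hw_ne_u, hw_ne_v⟩ := hnot
  rcases hc.dist_eq_dist_add_one_of_adj hwu huv with hdist | hdist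
  · exact hT w hw u hu v hv hw_ne_u huv.ne hw_ne_v (mem_gpInterval_of_adj hwu huv hdist)
  · exact hT w hw v hv u hu hw_ne_v huv.ne.symm hw_ne_u
      (mem_gpInterval_of_adj (hwu.trans huv.reachable) huv.symm hdist)

theorem stmt15_general {V : Type*} (G : SimpleGraph V) (hG : G.Connected)
    (hbip : G.Colorable 2) (u v : V)
    (huv : G.Adj u v) :
    IsMaximalGPSet G {u, v} :=
  ⟨isGPSet_pair G u v, fun T hT hsub => Set.Subset.antisymm
    (fun _ hw => hT.mem_pair_of_adj hbip huv (hsub (by simp)) (hsub (by simp)) hw (hG _ _)) hsub⟩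

/-- in a connected bipartite graph of order at least 2, every
pair of adjacent vertices is a maximal general position set. -/
theorem stmt15 {V : Type*} [Fintype V] (G : SimpleGraph V) (hG : G.Connected)
    (hbip : G.Colorable 2) (hcard : 2 ≤ Fintype.card V) (u v : V)
    (huv : G.Adj u v) :
    IsMaximalGPSet G {u, v} :=
  stmt15_general G hG hbip u v huv
end

section
/- In the Cartesian product Kₙ □ Kₘ (n, m ≥ 2), a set R of vertices is a general position set if and only if no two distinct vertices of R share a first coordinate while a third vertex of R shares the second coordinate with one of them; equivalently, for any three distinct vertices of R, either no two share a coordinate, or two share a coordinate i and the third differs from both in both coordinates. Concretely: three distinct vertices x, y, z of Kₙ □ Kₘ lie on a common shortest path if and only if two of them, say x and z, satisfy d(x,z) = 2 and the third y shares one coordinate with x and the other coordinate with z. -/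
open SimpleGraph

/-!
`Kₙ □ Kₘ` is the Hamming graph on two coordinates: the distance between two vertices is the
number of coordinates in which they differ. A vertex `b` lies on a shortest `a,c`-path exactly
when `d(a,b) + d(b,c) = d(a,c)`; if `b` differs from both `a` and `c`, the left side is at least
`2` while the right side is at most `2`, which forces `d(a,c) = 2` and `b` to agree with `a` in
one coordinate and with `c` in the other.
-/

section Interval

variable {V : Type*} {G : SimpleGraph V} {a b c : V}

theorem mem_gpInterval_iff_dist_add_dist (hab : G.Reachable a b) (hbc : G.Reachable b c) :
    b ∈ gpInterval G a c ↔ G.dist a b + G.dist b c = G.dist a c := by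
  constructor
  · rintro ⟨p, hp, hb⟩
    obtain ⟨q, r, rfl⟩ := Walk.mem_support_iff_exists_append.mp hb
    have := hab.dist_triangle_left c
    have := dist_le q
    have := dist_le r
    rw [Walk.length_append] at hp
    omega
  · intro h
    obtain ⟨q, hq⟩ := hab.exists_walk_length_eq_dist
    obtain ⟨r, hr⟩ := hbc.exists_walk_length_eq_dist
    exact ⟨q.append r, by rw [Walk.length_append, hq, hr, h],
      (q.mem_support_append_iff r).mpr (Or.inr r.start_mem_support)⟩

end Interval

section Hamming

variable {α β : Type*}

theorem reachable_top_boxProd_top (u v : α × β) :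
    ((⊤ : SimpleGraph α) □ (⊤ : SimpleGraph β)).Reachable u v :=
  reachable_boxProd.mpr ⟨reachable_top, reachable_top⟩

theorem dist_top_boxProd_top [DecidableEq α] [DecidableEq β] (u v : α × β) :
    ((⊤ : SimpleGraph α) □ (⊤ : SimpleGraph β)).dist u v =
      (if u.1 = v.1 then 0 else 1) + (if u.2 = v.2 then 0 else 1) := by
  rw [SimpleGraph.dist, edist_boxProd, edist_top, edist_top]
  split_ifs <;> rfl

theorem mem_gpInterval_top_boxProd_top_iff {a b c : α × β} (hab : a ≠ b) (hbc : b ≠ c) :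
    b ∈ gpInterval ((⊤ : SimpleGraph α) □ (⊤ : SimpleGraph β)) a c ↔
      ((⊤ : SimpleGraph α) □ (⊤ : SimpleGraph β)).dist a c = 2 ∧
        ((b.1 = a.1 ∧ b.2 = c.2) ∨ (b.2 = a.2 ∧ b.1 = c.1)) := by
  classical
  rw [mem_gpInterval_iff_dist_add_dist (reachable_top_boxProd_top a b)
    (reachable_top_boxProd_top b c), dist_top_boxProd_top, dist_top_boxProd_top,
    dist_top_boxProd_top]
  split_ifs <;> grind

end Hamming

theorem stmt17_general (n m : ℕ)
    (x y z : Fin n × Fin m) (hxy : x ≠ y) (hyz : y ≠ z) (hxz : x ≠ z) :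
    (∃ a b c : Fin n × Fin m, [a, b, c].Perm [x, y, z] ∧
        b ∈ gpInterval ((⊤ : SimpleGraph (Fin n)) □ (⊤ : SimpleGraph (Fin m))) a c) ↔
    (∃ a b c : Fin n × Fin m, [a, b, c].Perm [x, y, z] ∧
        ((⊤ : SimpleGraph (Fin n)) □ (⊤ : SimpleGraph (Fin m))).dist a c = 2 ∧
        ((b.1 = a.1 ∧ b.2 = c.2) ∨ (b.2 = a.2 ∧ b.1 = c.1))) := by
  have hxyz : [x, y, z].Nodup := by simp [hxy, hyz, hxz]
  refine exists_congr fun a => exists_congr fun b => exists_congr fun c =>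
    and_congr_right fun hperm => ?_
  have habc : [a, b, c].Nodup := hperm.nodup_iff.mpr hxyz
  simp only [List.nodup_cons, List.mem_cons, List.not_mem_nil] at habc
  exact mem_gpInterval_top_boxProd_top_iff (by tauto) (by tauto)

/-- three distinct vertices of `Kₙ □ Kₘ` lie on a common shortest
path iff two of them are at distance 2 and the third shares one coordinate with
each of them. -/
theorem stmt17 (n m : ℕ) (hn : 2 ≤ n) (hm : 2 ≤ m)
    (x y z : Fin n × Fin m) (hxy : x ≠ y) (hyz : y ≠ z) (hxz : x ≠ z) :
    (∃ a b c : Fin n × Fin m, [a, b, c].Perm [x, y, z] ∧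
        b ∈ gpInterval ((⊤ : SimpleGraph (Fin n)) □ (⊤ : SimpleGraph (Fin m))) a c) ↔
    (∃ a b c : Fin n × Fin m, [a, b, c].Perm [x, y, z] ∧
        ((⊤ : SimpleGraph (Fin n)) □ (⊤ : SimpleGraph (Fin m))).dist a c = 2 ∧
        ((b.1 = a.1 ∧ b.2 = c.2) ∨ (b.2 = a.2 ∧ b.1 = c.1))) :=
  stmt17_general n m x y z hxy hyz hxz
end

section
/- If n ≥ 3 is odd, then every maximal general position set of the cycle Cₙ has size 3; equivalently, no pair of vertices of Cₙ (n odd, n ≥ 5) forms a maximal general position set. -/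
/-!
On `Cₙ` the distance from `u` to `v` is the shorter of the two arc lengths `(v - u) mod n` and
`(u - v) mod n`, so a vertex lying on an arc from `u` to `w` of length at most `n / 2` lies on a
shortest `u,w`-path. Four vertices `a, b, c, d` in cyclic order split the cycle into the arcs
`a → c` and `c → a`; one of them has length at most `n / 2`, which puts `b` or `d` between the
other two, so general position sets have at most three vertices.

Conversely let `n = 2m + 1`. A pair `a, b` with `b - a = k ≤ m` extends by `c = b + m`: the three
distances `k`, `m`, `m + 1 - k` satisfy all three strict triangle inequalities because `n` is odd.
Sets with fewer than two vertices extend by any vertex, so no general position set with fewer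
than three vertices is maximal.
-/

open SimpleGraph

open Finset

section GeneralPosition

variable {V : Type*} {G : SimpleGraph V}

lemma mem_gpInterval_iff (hG : G.Preconnected) {u v w : V} :
    v ∈ gpInterval G u w ↔ G.dist u v + G.dist v w = G.dist u w := by
  classical
  constructor
  · rintro ⟨p, hp, hv⟩
    have hsplit := congrArg Walk.length (p.take_spec hv)
    rw [Walk.length_append] at hsplit
    have := dist_le (p.takeUntil v hv)
    have := dist_le (p.dropUntil v hv)
    have := (hG u v).dist_triangle_left w
    omega
  · intro h
    obtain ⟨p, hp⟩ := (hG u v).exists_walk_length_eq_dist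
    obtain ⟨q, hq⟩ := (hG v w).exists_walk_length_eq_dist
    exact ⟨p.append q, by rw [Walk.length_append, hp, hq, h],
      (Walk.mem_support_append_iff _ _).2 (.inl p.end_mem_support)⟩

lemma isGPSet_of_card_le_two (S : Finset V) (hS : #S ≤ 2) : IsGPSet G S :=
  fun u hu v hv w hw huv hvw huw _ =>
    hS.not_gt (two_lt_card.2 ⟨u, hu, v, hv, w, hw, huv, huw, hvw⟩)

lemma isGPSet_triple (hG : G.Preconnected) {a b c : V}
    (hb : G.dist a b + G.dist b c ≠ G.dist a c)
    (ha : G.dist a b + G.dist a c ≠ G.dist b c)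
    (hc : G.dist a c + G.dist b c ≠ G.dist a b) :
    IsGPSet G {a, b, c} := by
  have := G.dist_comm (u := a) (v := b)
  have := G.dist_comm (u := b) (v := c)
  have := G.dist_comm (u := a) (v := c)
  intro u hu v hv w hw huv hvw huw hmem
  rw [mem_gpInterval_iff hG] at hmem
  simp only [Set.mem_insert_iff, Set.mem_singleton_iff] at hu hv hw
  rcases hu with rfl | rfl | rfl <;> rcases hv with rfl | rfl | rfl <;>
    rcases hw with rfl | rfl | rfl <;> first | contradiction | omega

end GeneralPosition

lemma Fin.val_sub_cases {n : ℕ} (a b : Fin n) :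
    (b : ℕ) ≤ a ∧ ((a - b : Fin n) : ℕ) = a - b ∨
      (a : ℕ) < b ∧ ((a - b : Fin n) : ℕ) = n + a - b := by
  rcases le_or_gt b a with h | h
  · exact .inl ⟨h, Fin.sub_val_of_le h⟩
  · exact .inr ⟨h, Fin.coe_sub_iff_lt.2 h⟩

section Cycle

open Fin.NatCast

variable {n : ℕ}

lemma cycleGraph_adj_add_one [NeZero n] (hn : 1 < n) (u : Fin n) :
    (cycleGraph n).Adj u (u + 1) := by
  rw [cycleGraph_adj', add_sub_cancel_left, Fin.val_one', Nat.mod_eq_of_lt hn]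
  exact .inr rfl

lemma cycleGraph_dist_add_le [NeZero n] (hn : 1 < n) (u : Fin n) (k : ℕ) :
    (cycleGraph n).dist u (u + k) ≤ k := by
  induction k with
  | zero => simp
  | succ k ih =>
    have hadj : (cycleGraph n).Adj (u + k) (u + (k + 1 : ℕ)) := by
      simpa [add_assoc] using cycleGraph_adj_add_one hn (u + k)
    calc (cycleGraph n).dist u (u + (k + 1 : ℕ))
        ≤ (cycleGraph n).dist u (u + k) + (cycleGraph n).dist (u + k) (u + (k + 1 : ℕ)) :=
          hadj.reachable.dist_triangle_right u
      _ ≤ k + 1 := by rw [dist_eq_one_iff_adj.2 hadj]; omega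

lemma cycleGraph_min_val_sub_le_length {u v : Fin n} (p : (cycleGraph n).Walk u v) :
    min (v - u : Fin n).val (u - v : Fin n).val ≤ p.length := by
  induction p with
  | nil => simp [Fin.sub_val_of_le le_rfl]
  | @cons u w v hadj p ih =>
    rw [cycleGraph_adj'] at hadj
    have := Fin.val_sub_cases u w
    have := Fin.val_sub_cases w u
    have := Fin.val_sub_cases u v
    have := Fin.val_sub_cases v u
    have := Fin.val_sub_cases w v
    have := Fin.val_sub_cases v w
    rw [Walk.length_cons]
    omega

lemma cycleGraph_dist (u v : Fin n) :
    (cycleGraph n).dist u v = min (v - u : Fin n).val (u - v : Fin n).val := by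
  obtain ⟨p, hp⟩ := (cycleGraph_preconnected u v).exists_walk_length_eq_dist
  refine le_antisymm ?_ (hp ▸ cycleGraph_min_val_sub_le_length p)
  rcases le_or_gt n 1 with hn | hn
  · have : Subsingleton (Fin n) := Fin.subsingleton_iff_le_one.2 hn
    simp [Subsingleton.elim u v]
  have : NeZero n := ⟨by omega⟩
  refine le_min ?_ ?_
  · simpa using cycleGraph_dist_add_le hn u (v - u).val
  · simpa [dist_comm] using cycleGraph_dist_add_le hn v (u - v).val

lemma mem_gpInterval_cycleGraph {u v w : Fin n}
    (h : 2 * ((v - u : Fin n).val + (w - v : Fin n).val) ≤ n) :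
    v ∈ gpInterval (cycleGraph n) u w := by
  rw [mem_gpInterval_iff cycleGraph_preconnected, cycleGraph_dist, cycleGraph_dist,
    cycleGraph_dist]
  have := Fin.val_sub_cases u v
  have := Fin.val_sub_cases v u
  have := Fin.val_sub_cases u w
  have := Fin.val_sub_cases w u
  have := Fin.val_sub_cases v w
  have := Fin.val_sub_cases w v
  omega

lemma card_le_three_of_isGPSet_cycleGraph {S : Finset (Fin n)}
    (hS : IsGPSet (cycleGraph n) S) : #S ≤ 3 := by
  by_contra! h
  obtain ⟨T, hTS, hT⟩ := exists_subset_card_eq (show 4 ≤ #S by omega)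
  set f := T.orderEmbOfFin hT
  have mem (i : Fin 4) : f i ∈ (S : Set (Fin n)) := hTS (T.orderEmbOfFin_mem hT i)
  have h01 : f 0 < f 1 := f.strictMono (by decide)
  have h12 : f 1 < f 2 := f.strictMono (by decide)
  have h23 : f 2 < f 3 := f.strictMono (by decide)
  have h02 := h01.trans h12
  have h03 := h02.trans h23
  have : (f 0 : ℕ) < f 1 := h01
  have : (f 1 : ℕ) < f 2 := h12
  have : (f 2 : ℕ) < f 3 := h23
  have := Fin.val_sub_cases (f 1) (f 0)
  have := Fin.val_sub_cases (f 2) (f 1)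
  have := Fin.val_sub_cases (f 3) (f 2)
  have := Fin.val_sub_cases (f 0) (f 3)
  by_cases h02n : 2 * ((f 2 : ℕ) - f 0) ≤ n
  · exact hS _ (mem 0) _ (mem 1) _ (mem 2) h01.ne h12.ne h02.ne
      (mem_gpInterval_cycleGraph (by omega))
  · exact hS _ (mem 2) _ (mem 3) _ (mem 0) h23.ne h03.ne' h02.ne'
      (mem_gpInterval_cycleGraph (by omega))

end Cycle

lemma exists_isGPSet_cycleGraph_insert_pair {m : ℕ} {a b : Fin (2 * m + 1)} (hab : a ≠ b) :
    ∃ c, c ≠ a ∧ c ≠ b ∧ IsGPSet (cycleGraph (2 * m + 1)) {c, a, b} := by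
  have hab' : (a : ℕ) ≠ b := Fin.val_ne_of_ne hab
  wlog hba : (b - a : Fin _).val ≤ m generalizing a b with H
  · have := Fin.val_sub_cases a b
    have := Fin.val_sub_cases b a
    obtain ⟨c, hca, hcb, hc⟩ := H hab.symm hab'.symm (by omega)
    exact ⟨c, hcb, hca, by rwa [Set.pair_comm]⟩
  obtain ⟨c, hc⟩ : ∃ c : Fin (2 * m + 1), (c : ℕ) = b + m ∨ (c : ℕ) + (2 * m + 1) = b + m :=
    ⟨b + ⟨m, by omega⟩, by simp only [Fin.val_add_eq_ite]; split_ifs <;> omega⟩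
  have := a.isLt
  have := b.isLt
  have := c.isLt
  have := Fin.val_sub_cases a b
  have := Fin.val_sub_cases b a
  have dab : (cycleGraph _).dist a b = (b - a : Fin _).val := by
    rw [cycleGraph_dist]
    omega
  have dcb : (cycleGraph _).dist c b = m := by
    rw [cycleGraph_dist]
    have := Fin.val_sub_cases b c
    have := Fin.val_sub_cases c b
    omega
  have dca : (cycleGraph _).dist c a = m + 1 - (b - a : Fin _).val := by
    rw [cycleGraph_dist]
    have := Fin.val_sub_cases a c
    have := Fin.val_sub_cases c a
    omega
  exact ⟨c, Fin.ne_of_val_ne (by omega), Fin.ne_of_val_ne (by omega),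
    isGPSet_triple cycleGraph_preconnected (by omega) (by omega) (by omega)⟩

lemma exists_isGPSet_cycleGraph_insert {m : ℕ} (hm : 1 ≤ m) (S : Finset (Fin (2 * m + 1)))
    (hS : #S ≤ 2) : ∃ c ∉ S, IsGPSet (cycleGraph (2 * m + 1)) (insert c (S : Set _)) := by
  rcases hS.lt_or_eq with hS | hS
  · obtain ⟨c, -, hc⟩ := exists_mem_notMem_of_card_lt_card (s := S) (t := univ)
      (by rw [card_univ, Fintype.card_fin]; omega)
    refine ⟨c, hc, ?_⟩
    rw [← coe_insert]
    exact isGPSet_of_card_le_two _ (by rw [card_insert_of_notMem hc]; omega)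
  · obtain ⟨a, b, hab, rfl⟩ := card_eq_two.1 hS
    obtain ⟨c, hca, hcb, hc⟩ := exists_isGPSet_cycleGraph_insert_pair hab
    exact ⟨c, by simp [hca, hcb], by simpa using hc⟩

/-- for odd `n ≥ 3`, every maximal general position set of the
cycle `Cₙ` has size 3. -/
theorem stmt19 (n : ℕ) (hn : 3 ≤ n) (hodd : Odd n) (S : Finset (Fin n))
    (hS : IsMaximalGPSet (cycleGraph n) ↑S) :
    S.card = 3 := by
  obtain ⟨m, rfl⟩ := hodd
  refine le_antisymm (card_le_three_of_isGPSet_cycleGraph hS.1) (not_lt.1 fun hlt => ?_)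
  obtain ⟨c, hcS, hc⟩ := exists_isGPSet_cycleGraph_insert (by omega) S (by omega)
  exact hcS (Set.insert_eq_self.1 (hS.2 _ hc (Set.subset_insert c _)))
end
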